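/- arXiv:2405.20964 — 2 statements merged into one kernel-verified Lean document; each statement's English description precedes it below -/
import Mathlib

section
/- Let N be a closed normal subgroup of a profinite group G, and let x ∈ G be an element such that the closed subgroup generated by x has order coprime to the order of N, i.e. π(⟨x⟩) ∩ π(N) = ∅. Then the centraliser of the image of x in G/N equals the image of C_G(x)N, that is, C_{G/N}(xN) = C_G(x)N/N. -/
/-- The closed derived series of a topological group: at each step take the
topological closure of the commutator subgroup of the previous term. -/
def closedDerivedSeries (G : Type*) [Group G] [TopologicalSpace G] [IsTopologicalGroup G] :
    ℕ → Subgroup G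
  | 0 => ⊤
  | n + 1 => (⁅closedDerivedSeries G n, closedDerivedSeries G n⁆).topologicalClosure

/-- A topological group is soluble of derived length at most `n` if the `n`-th term of the
closed derived series is trivial. -/
def SolubleOfLength (G : Type*) [Group G] [TopologicalSpace G] [IsTopologicalGroup G]
    (n : ℕ) : Prop :=
  closedDerivedSeries G n = ⊥

/-- Soluble: soluble of derived length at most `n` for some `n`. -/
def Soluble (G : Type*) [Group G] [TopologicalSpace G] [IsTopologicalGroup G] : Prop :=
  ∃ n, SolubleOfLength G n

/-- `CA_d`: the centraliser of every non-trivial element is soluble of derived length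
at most `d`. -/
def IsCA (G : Type*) [Group G] [TopologicalSpace G] [IsTopologicalGroup G] (d : ℕ) : Prop :=
  ∀ x : G, x ≠ 1 → SolubleOfLength ↥(Subgroup.centralizer {x}) d

/-- Pro-`p`: every open normal subgroup has index a power of `p`. -/
def IsProP (G : Type*) [Group G] [TopologicalSpace G] (p : ℕ) : Prop :=
  ∀ N : Subgroup G, N.Normal → IsOpen (N : Set G) → ∃ k : ℕ, N.index = p ^ k

/-- Virtually pro-`p` (for some prime `p`): some open subgroup is pro-`p`. -/
def VirtuallyProP (G : Type*) [Group G] [TopologicalSpace G] : Prop :=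
  ∃ p : ℕ, p.Prime ∧ ∃ H : Subgroup G, IsOpen (H : Set G) ∧ IsProP ↥H p

/-- Prosoluble: the quotient by every open normal subgroup is soluble. -/
def Prosoluble (G : Type*) [Group G] [TopologicalSpace G] : Prop :=
  ∀ (N : Subgroup G) [N.Normal], IsOpen (N : Set G) → IsSolvable (G ⧸ N)

/-- Pronilpotent: the quotient by every open normal subgroup is nilpotent. -/
def Pronilpotent (G : Type*) [Group G] [TopologicalSpace G] : Prop :=
  ∀ (N : Subgroup G) [N.Normal], IsOpen (N : Set G) → Group.IsNilpotent (G ⧸ N)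

/-- `primesOf G` = π(G): the set of primes dividing the order of some finite continuous
quotient of `G`, i.e. dividing the index of some open normal subgroup. -/
def primesOf (G : Type*) [Group G] [TopologicalSpace G] : Set ℕ :=
  {p | p.Prime ∧ ∃ N : Subgroup G, N.Normal ∧ IsOpen (N : Set G) ∧ p ∣ N.index}

/-- The Fitting height is at most `n`: there is a chain `1 = G_0 ≤ ⋯ ≤ G_n = G` of closed
normal subgroups all of whose successive quotients are pronilpotent. -/
def FittingHeightLe (G : Type*) [Group G] [TopologicalSpace G] (n : ℕ) : Prop :=
  ∃ c : ℕ → Subgroup G,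
    Monotone c ∧ c 0 = ⊥ ∧ c n = ⊤ ∧
    (∀ i, (c i).Normal ∧ IsClosed ((c i : Set G))) ∧
    ∀ i, i < n → ∀ [((c i).subgroupOf (c (i + 1))).Normal],
      Pronilpotent (↥(c (i + 1)) ⧸ (c i).subgroupOf (c (i + 1)))

/-!
Let conjugation by an element `y` of a finite group preserve a coset `hM` of a subgroup `M` of
order prime to `orderOf y`. Then `y` centralises a point of `hM`. For the `p`-part `u` of `y`
this is the fixed-point theorem for `p`-groups, as `|hM| = |M|` is prime to `p`. If `u` fixes
`h₀ ∈ hM`, the `p'`-part `v` of `y` preserves the smaller coset `h₀ (M ∩ C(u))`, and induction on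
the order of `y` yields a point of it centralised by `v`, hence by `u` and `v`, hence by `y`.

In the profinite group `G`, applying this in each finite quotient `G/U` gives `a ∈ gN` with
`⁅x, a⁆ ∈ U`. The commutators `⁅x, a⁆` with `a ∈ gN` form a compact set meeting every open
normal subgroup, so it contains `1`.
-/

open Subgroup MulAction ConjAct
open scoped Pointwise commutatorElement

section FiniteCoprime

variable {Q : Type*} [Group Q]

theorem Commute.of_pow_of_pow_of_coprime {a b : Q} {m n : ℕ} (hmn : m.Coprime n)
    (hm : Commute (a ^ m) b) (hn : Commute (a ^ n) b) : Commute a b := by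
  obtain ⟨s, t, hst⟩ := Nat.isCoprime_iff_coprime.mpr hmn
  have ha : a = (a ^ m) ^ s * (a ^ n) ^ t := by
    rw [← zpow_natCast, ← zpow_natCast, ← zpow_mul, ← zpow_mul, ← zpow_add, mul_comm _ s,
      mul_comm _ t, hst, zpow_one]
  rw [ha]
  exact (hm.zpow_left s).mul_left (hn.zpow_left t)

theorem orderOf_pow_of_orderOf_eq_mul {y : Q} {a b : ℕ} (hy : orderOf y = a * b) (hb : b ≠ 0) :
    orderOf (y ^ b) = a := by
  rw [orderOf_pow_of_dvd hb (hy ▸ dvd_mul_left b a), hy,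
    Nat.mul_div_cancel _ (Nat.pos_of_ne_zero hb)]

theorem exists_commute_mem_of_orderOf_eq_prime_pow [Finite Q] {p e : ℕ} [Fact p.Prime]
    {S : Set Q} {u : Q} (hu : toConjAct u ∈ stabilizer (ConjAct Q) S)
    (hu_ord : orderOf u = p ^ e) (hpS : ¬ p ∣ Nat.card S) : ∃ c ∈ S, Commute u c := by
  let P := zpowers (⟨toConjAct u, hu⟩ : stabilizer (ConjAct Q) S)
  have hP : IsPGroup p P := IsPGroup.of_card <| by
    rw [Nat.card_zpowers, Subgroup.orderOf_mk, MulEquiv.orderOf_eq, hu_ord]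
  obtain ⟨c, hc⟩ := hP.nonempty_fixed_point_of_prime_not_dvd_card S hpS
  have hfix : u * c * u⁻¹ = c := by
    simpa [toConjAct_smul] using congrArg Subtype.val (hc ⟨_, mem_zpowers _⟩)
  exact ⟨c, c.2, (eq_mul_inv_iff_mul_eq.mp hfix.symm).symm⟩

theorem mem_stabilizer_smul_inf_centralizer {M : Subgroup Q} {h u v : Q}
    (hv : toConjAct v ∈ stabilizer (ConjAct Q) (h • (M : Set Q)))
    (huv : Commute u v) (huh : Commute u h) :
    toConjAct v ∈ stabilizer (ConjAct Q) (h • ((M ⊓ centralizer {u} : Subgroup Q) : Set Q)) := by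
  have hh : h ∈ centralizer {u} := mem_centralizer_singleton_iff.mpr huh.eq.symm
  rw [coe_inf, Set.smul_set_inter, smul_coe_set hh, mem_stabilizer_set]
  intro b
  have hvu : v * u * v⁻¹ = u := by rw [← huv.eq, mul_inv_cancel_right]
  have hconj : Commute (v * b * v⁻¹) u ↔ Commute b u := by
    conv_lhs => rw [← hvu]
    exact Commute.conj_iff v
  rw [Set.mem_inter_iff, Set.mem_inter_iff, mem_stabilizer_set.mp hv, SetLike.mem_coe,
    SetLike.mem_coe, mem_centralizer_singleton_iff, mem_centralizer_singleton_iff,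
    toConjAct_smul]
  exact Iff.and Iff.rfl hconj

theorem exists_commute_mem_smul_of_coprime [Finite Q] {M : Subgroup Q} {h y : Q}
    (hy : toConjAct y ∈ stabilizer (ConjAct Q) (h • (M : Set Q)))
    (hcop : (orderOf y).Coprime (Nat.card M)) :
    ∃ c ∈ h • (M : Set Q), Commute y c := by
  induction hn : orderOf y using Nat.strong_induction_on generalizing y M h with
  | _ n ih =>
  subst hn
  rcases eq_or_ne (orderOf y) 1 with hy1 | hy1
  · exact ⟨h, by simp [mem_leftCoset_iff], orderOf_eq_one_iff.mp hy1 ▸ Commute.one_left h⟩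
  obtain ⟨p, hp, hpy⟩ := Nat.exists_prime_and_dvd hy1
  have := Fact.mk hp
  obtain ⟨e, m, hpm, hym⟩ :=
    Nat.exists_eq_pow_mul_and_not_dvd (orderOf_pos y).ne' p hp.ne_one
  have he : e ≠ 0 := by rintro rfl; rw [hym, pow_zero, one_mul] at hpy; exact hpm hpy
  have hm0 : m ≠ 0 := by rintro rfl; exact hpm (dvd_zero p)
  -- `y ^ m` is the `p`-part `u` of `y` and `y ^ p ^ e` its `p'`-part `v`.
  have hu_ord : orderOf (y ^ m) = p ^ e := orderOf_pow_of_orderOf_eq_mul hym hm0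
  have hv_ord : orderOf (y ^ p ^ e) = m :=
    orderOf_pow_of_orderOf_eq_mul (hym.trans (mul_comm _ _)) (pow_ne_zero e hp.ne_zero)
  have hpM : ¬ p ∣ Nat.card ↥(h • (M : Set Q)) := by
    rw [Set.natCard_smul_set]
    exact (Nat.Prime.coprime_iff_not_dvd hp).mp (hcop.coprime_dvd_left hpy)
  obtain ⟨h₀, hh₀, hu⟩ := exists_commute_mem_of_orderOf_eq_prime_pow
    (by rw [map_pow]; exact pow_mem hy m) hu_ord hpM
  have hcoset : h₀ • (M : Set Q) = h • M :=
    (leftCoset_eq_iff M).mpr (by simpa using inv_mem ((mem_leftCoset_iff h).mp hh₀))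
  rw [← hcoset] at hy ⊢
  have hmy : m < orderOf y :=
    hym ▸ lt_mul_left (Nat.pos_of_ne_zero hm0) (Nat.one_lt_pow he hp.one_lt)
  have hv_cop : (orderOf (y ^ p ^ e)).Coprime (Nat.card ↥(M ⊓ centralizer {y ^ m})) := by
    rw [hv_ord]
    exact (hcop.coprime_dvd_left (hym ▸ dvd_mul_left m _)).coprime_dvd_right
      (card_dvd_of_le inf_le_left)
  obtain ⟨c, hc, hvc⟩ := ih m hmy
    (mem_stabilizer_smul_inf_centralizer (by rw [map_pow]; exact pow_mem hy _)
      (Commute.pow_pow_self y m _) hu) hv_cop hv_ord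
  have hcM : c ∈ h₀ • (M : Set Q) := Set.smul_set_mono (by simp) hc
  have huc : c ∈ centralizer {y ^ m} := by
    rw [← SetLike.mem_coe, ← smul_coe_set (mem_centralizer_singleton_iff.mpr hu.eq.symm)]
    exact Set.smul_set_mono (by simp) hc
  exact ⟨c, hcM, .of_pow_of_pow_of_coprime (hp.coprime_pow_of_not_dvd hpm)
    (mem_centralizer_singleton_iff.mp huc).symm hvc⟩

theorem exists_commute_mem_smul_of_commutatorElement_mem [Finite Q] {M : Subgroup Q} [M.Normal]
    {h y : Q} (hyh : ⁅y, h⁆ ∈ M) (hcop : (orderOf y).Coprime (Nat.card M)) :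
    ∃ c ∈ h • (M : Set Q), Commute y c := by
  refine exists_commute_mem_smul_of_coprime ((mem_stabilizer_set' (Set.toFinite _)).mpr ?_) hcop
  intro b hb
  rw [mem_leftCoset_iff] at hb ⊢
  have hconj : h⁻¹ * (toConjAct y • b) = h⁻¹ * ⁅y, h⁆ * h * (y * (h⁻¹ * b) * y⁻¹) := by
    rw [toConjAct_smul, commutatorElement_def]; group
  rw [hconj]
  exact mul_mem (Normal.conj_mem' inferInstance _ hyh h) (Normal.conj_mem inferInstance _ hb y)

end FiniteCoprime

section Profinite

variable {G : Type*} [Group G] [TopologicalSpace G]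

theorem mem_primesOf_of_dvd_card_map_mk {U : Subgroup G} [U.Normal] (hU : IsOpen (U : Set G))
    {H : Subgroup G} {p : ℕ} (hp : p.Prime) (hdvd : p ∣ Nat.card (H.map (QuotientGroup.mk' U))) :
    p ∈ primesOf H := by
  refine ⟨hp, U.subgroupOf H, inferInstance, hU.preimage continuous_subtype_val, ?_⟩
  rwa [← relIndex_ker, QuotientGroup.ker_mk'] at hdvd

theorem coprime_orderOf_mk_card_map_mk {H N : Subgroup G} (hcop : primesOf H ∩ primesOf N = ∅)
    {x : G} (hx : x ∈ H) {U : Subgroup G} [U.Normal] (hU : IsOpen (U : Set G)) :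
    (orderOf (x : G ⧸ U)).Coprime (Nat.card (N.map (QuotientGroup.mk' U))) := by
  refine Nat.coprime_of_dvd fun p hp hpx hpN => ?_
  have hxH : (x : G ⧸ U) ∈ H.map (QuotientGroup.mk' U) := mem_map_of_mem _ hx
  exact hcop.subset ⟨mem_primesOf_of_dvd_card_map_mk hU hp (hpx.trans (orderOf_dvd_natCard _ hxH)),
    mem_primesOf_of_dvd_card_map_mk hU hp hpN⟩

variable [IsTopologicalGroup G] [CompactSpace G]

theorem exists_mem_smul_commutatorElement_mem {H N : Subgroup G} [N.Normal]
    (hcop : primesOf H ∩ primesOf N = ∅) {x g : G} (hx : x ∈ H) (hxg : ⁅x, g⁆ ∈ N)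
    {U : Subgroup G} [U.Normal] (hU : IsOpen (U : Set G)) :
    ∃ a ∈ g • (N : Set G), ⁅x, a⁆ ∈ U := by
  have := U.quotient_finite_of_isOpen hU
  obtain ⟨_, ⟨_, ⟨n, hn, rfl⟩, rfl⟩, hxc⟩ :=
    exists_commute_mem_smul_of_commutatorElement_mem (h := (g : G ⧸ U))
      (mem_map_of_mem (QuotientGroup.mk' U) hxg) (coprime_orderOf_mk_card_map_mk hcop hx hU)
  refine ⟨g * n, Set.smul_mem_smul_set hn, ?_⟩
  rw [← QuotientGroup.eq_one_iff, ← QuotientGroup.mk'_apply, map_commutatorElement, map_mul]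
  exact commutatorElement_eq_one_iff_commute.mpr hxc

variable [TotallyDisconnectedSpace G]

theorem one_mem_of_forall_openNormal_inter_nonempty {S : Set G} (hS : IsClosed S)
    (hSU : ∀ U : Subgroup G, U.Normal → IsOpen (U : Set G) → (S ∩ U).Nonempty) : 1 ∈ S := by
  by_contra h1
  obtain ⟨U, hUS⟩ := ProfiniteGrp.exist_openNormalSubgroup_sub_open_nhds_of_one hS.isOpen_compl h1
  obtain ⟨s, hsS, hsU⟩ := hSU U.toSubgroup U.isNormal' U.isOpen'
  exact hUS hsU hsS

theorem exists_commute_mem_smul_of_primesOf_inter_eq_empty {H N : Subgroup G} [N.Normal]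
    (hNc : IsClosed (N : Set G)) (hcop : primesOf H ∩ primesOf N = ∅) {x g : G} (hx : x ∈ H)
    (hxg : ⁅x, g⁆ ∈ N) : ∃ a ∈ g • (N : Set G), Commute x a := by
  have hS : IsClosed ((fun a => ⁅x, a⁆) '' (g • (N : Set G))) :=
    ((hNc.smul g).isCompact.image (by simp only [commutatorElement_def]; fun_prop)).isClosed
  obtain ⟨a, ha, hxa⟩ := one_mem_of_forall_openNormal_inter_nonempty hS fun U _ hU =>
    let ⟨a, ha, haU⟩ := exists_mem_smul_commutatorElement_mem hcop hx hxg hU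
    ⟨_, ⟨a, ha, rfl⟩, haU⟩
  exact ⟨a, ha, commutatorElement_eq_one_iff_commute.mp hxa⟩

end Profinite

theorem centralizer_quotient_eq_of_coprime_general
    (G : Type*) [Group G] [TopologicalSpace G] [IsTopologicalGroup G]
    [CompactSpace G] [TotallyDisconnectedSpace G]
    (N : Subgroup G) [N.Normal] (hNc : IsClosed (N : Set G)) (x : G)
    (hcop : primesOf ↥((Subgroup.zpowers x).topologicalClosure) ∩ primesOf ↥N = ∅) :
    Subgroup.centralizer {(QuotientGroup.mk x : G ⧸ N)} =
      (Subgroup.centralizer {x} ⊔ N).map (QuotientGroup.mk' N) := by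
  refine le_antisymm (fun q hq => ?_) ?_
  · obtain ⟨g, rfl⟩ := QuotientGroup.mk_surjective q
    have hxg : ⁅x, g⁆ ∈ N := by
      rw [← QuotientGroup.eq_one_iff, ← QuotientGroup.mk'_apply, map_commutatorElement,
        commutatorElement_eq_one_iff_commute]
      exact (mem_centralizer_singleton_iff.mp hq).symm
    obtain ⟨a, ha, hxa⟩ := exists_commute_mem_smul_of_primesOf_inter_eq_empty hNc hcop
      (le_topologicalClosure _ (mem_zpowers x)) hxg
    refine ⟨a, mem_sup_left (mem_centralizer_singleton_iff.mpr hxa.eq.symm), ?_⟩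
    exact QuotientGroup.eq.mpr (by simpa using inv_mem ((mem_leftCoset_iff g).mp ha))
  · rw [Subgroup.map_sup, QuotientGroup.map_mk'_self, sup_bot_eq]
    exact (map_centralizer_le_centralizer_image _ _).trans (by simp)

/-- Lemma 2.3: if `N ⊴ G` is closed and `x ∈ G` satisfies `(|⟨x⟩|, |N|) = 1`, then
`C_{G/N}(xN) = C_G(x)N/N`. -/
theorem centralizer_quotient_eq_of_coprime
    (G : Type*) [Group G] [TopologicalSpace G] [IsTopologicalGroup G]
    [CompactSpace G] [T2Space G] [TotallyDisconnectedSpace G]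
    (N : Subgroup G) [N.Normal] (hNc : IsClosed (N : Set G)) (x : G)
    (hcop : primesOf ↥((Subgroup.zpowers x).topologicalClosure) ∩ primesOf ↥N = ∅) :
    Subgroup.centralizer {(QuotientGroup.mk x : G ⧸ N)} =
      (Subgroup.centralizer {x} ⊔ N).map (QuotientGroup.mk' N) :=
  centralizer_quotient_eq_of_coprime_general G N hNc x hcop
end

section
/- Let G = BA be a profinite group which is the product of a non-trivial closed normal subgroup B and a closed subgroup A such that π(A) ∩ π(B) = ∅, and suppose G is a CA_d-group for a positive integer d. Then A has an open subgroup that is soluble of derived length at most d; if moreover A is infinite, then B is soluble of derived length at most d. -/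
open scoped Pointwise

/-!
If `A` is finite, the trivial subgroup of `A` is open. Otherwise every open normal subgroup `M`
meets `A` nontrivially, hence contains a nontrivial `p`-element `z` of `A`, and `p ∉ π(B)`.
A `p`-group acting on a finite group of order prime to `p` fixes a point of every invariant coset;
applied in the finite quotients of `G` and passed to `G` by compactness, this gives
`B ≤ C_G(z) M`, so the `d`-th derived subgroup of `B` lies in every `M` and is trivial.
Now let `W` be the closure of the last nontrivial term of the derived series of `B`: it is abelian,
normal and of order prime to `A`. Choose `w₀ ∈ W` outside some open normal `M`. Coprime action on
an abelian group has no nontrivial cocycles, so, again via finite quotients and compactness,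
`A ⊓ M` centralises some `w ∈ w₀ (W ⊓ M)`; as `w ≠ 1`, the open subgroup `A ⊓ M` of `A` is
soluble of derived length at most `d`.
-/

open scoped commutatorElement

open Subgroup

section ClosedDerivedSeries

variable {G H : Type*} [Group G] [TopologicalSpace G] [IsTopologicalGroup G]
  [Group H] [TopologicalSpace H] [IsTopologicalGroup H]

theorem Subgroup.map_topologicalClosure_le {f : G →* H} (hf : Continuous f) (S : Subgroup G) :
    S.topologicalClosure.map f ≤ (S.map f).topologicalClosure := by
  rintro - ⟨x, hx, rfl⟩
  exact image_closure_subset_closure_image hf ⟨x, hx, rfl⟩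

theorem Subgroup.commutator_topologicalClosure_le (K L : Subgroup G) :
    ⁅K.topologicalClosure, L.topologicalClosure⁆ ≤ ⁅K, L⁆.topologicalClosure :=
  commutator_le.2 fun _ hx _ hy =>
    map_mem_closure₂ (f := fun a b => ⁅a, b⁆) (by simp only [commutatorElement_def]; fun_prop)
      hx hy fun _ hx _ hy => commutator_mem_commutator hx hy

theorem closedDerivedSeries_map_le {f : G →* H} (hf : Continuous f) (n : ℕ) :
    (closedDerivedSeries G n).map f ≤ closedDerivedSeries H n := by
  induction n with
  | zero => exact le_top
  | succ n ih =>
    refine (map_topologicalClosure_le hf _).trans (topologicalClosure_mono ?_)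
    rw [map_commutator]
    exact commutator_mono ih ih

theorem SolubleOfLength.of_injective {f : G →* H} (hf : Continuous f)
    (hinj : Function.Injective f) {n : ℕ} (h : SolubleOfLength H n) : SolubleOfLength G n :=
  (map_eq_bot_iff_of_injective _ hinj).1 (le_bot_iff.1 (h ▸ closedDerivedSeries_map_le hf n))

theorem solubleOfLength_of_subsingleton [Subsingleton G] (n : ℕ) : SolubleOfLength G n :=
  eq_bot_of_subsingleton _

theorem derivedSeries_le_closedDerivedSeries (n : ℕ) :
    derivedSeries G n ≤ closedDerivedSeries G n := by
  induction n with
  | zero => exact le_rfl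
  | succ n ih => exact (commutator_mono ih ih).trans (le_topologicalClosure _)

theorem closedDerivedSeries_le_topologicalClosure_derivedSeries (n : ℕ) :
    closedDerivedSeries G n ≤ (derivedSeries G n).topologicalClosure := by
  induction n with
  | zero => exact le_topologicalClosure _
  | succ n ih =>
    refine topologicalClosure_minimal _ ?_ (isClosed_topologicalClosure _)
    exact (commutator_mono ih ih).trans (commutator_topologicalClosure_le _ _)

theorem SolubleOfLength.derivedSeries_eq_bot {n : ℕ} (h : SolubleOfLength G n) :
    derivedSeries G n = ⊥ :=
  le_bot_iff.1 (h ▸ derivedSeries_le_closedDerivedSeries n)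

theorem solubleOfLength_of_derivedSeries_eq_bot [T1Space G] {n : ℕ}
    (h : derivedSeries G n = ⊥) : SolubleOfLength G n := by
  refine le_bot_iff.1 ((closedDerivedSeries_le_topologicalClosure_derivedSeries n).trans ?_)
  rw [h]
  exact topologicalClosure_minimal _ le_rfl (by simp)

theorem exists_isMulCommutative_normal_le [T2Space G] {B : Subgroup G} [B.Normal]
    (hB : IsClosed (B : Set G)) (hB1 : B ≠ ⊥) {n : ℕ} (hn : derivedSeries B n = ⊥) :
    ∃ W : Subgroup G, W.Normal ∧ IsMulCommutative W ∧ IsClosed (W : Set G) ∧ W ≠ ⊥ ∧ W ≤ B := by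
  have : Nontrivial B := (nontrivial_iff_ne_bot B).2 hB1
  obtain ⟨k, hk, hk1⟩ : ∃ k, derivedSeries B k ≠ ⊥ ∧ derivedSeries B (k + 1) = ⊥ := by
    induction n with
    | zero => exact absurd hn top_ne_bot
    | succ n ih =>
      by_cases h : derivedSeries B n = ⊥
      exacts [ih h, ⟨n, h, hn⟩]
  set D := (derivedSeries B k).map B.subtype
  have hD : ∀ x y : D, x * y = y * x := by
    rintro ⟨-, x, hx, rfl⟩ ⟨-, y, hy, rfl⟩
    have := commutator_mem_commutator hx hy
    rw [← derivedSeries_succ, hk1, mem_bot, commutatorElement_eq_one_iff_mul_comm] at this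
    exact Subtype.ext (congrArg Subtype.val this : ((x * y : B) : G) = (y * x : B))
  refine ⟨D.topologicalClosure, D.is_normal_topologicalClosure,
    ⟨⟨(D.commGroupTopologicalClosure hD).mul_comm⟩⟩, D.isClosed_topologicalClosure,
    ?_, topologicalClosure_minimal _ (map_subtype_le _) hB⟩
  refine ne_bot_of_le_ne_bot ?_ (le_topologicalClosure D)
  rwa [Ne, map_eq_bot_iff_of_injective _ B.subtype_injective]

end ClosedDerivedSeries

theorem map_derivedSeries_le_of_range_le {G H Q : Type*} [Group G] [Group H] [Group Q]
    {f : G →* Q} {g : H →* Q} (h : f.range ≤ g.range) (n : ℕ) :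
    (derivedSeries G n).map f ≤ (derivedSeries H n).map g := by
  induction n with
  | zero => simpa [← MonoidHom.range_eq_map] using h
  | succ n ih =>
    simp only [derivedSeries_succ, map_commutator]
    exact commutator_mono ih ih

theorem QuotientGroup.commute_mk_iff {G : Type*} [Group G] {N : Subgroup G} [N.Normal]
    {x y : G} : Commute (x : G ⧸ N) y ↔ ⁅x, y⁆ ∈ N := by
  rw [← commutatorElement_eq_one_iff_commute, ← eq_one_iff]
  exact Iff.rfl

section FiniteGroup

theorem exists_mul_smul_eq_of_coprime {Q V : Type*} [Group Q] [Finite Q] [CommGroup V]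
    [MulDistribMulAction Q V] (hcop : (Nat.card V).Coprime (Nat.card Q)) {δ : Q → V}
    (hδ : ∀ q r, δ (q * r) = δ q * q • δ r) : ∃ s : V, ∀ q, δ q * q • s = s := by
  have := Fintype.ofFinite Q
  set σ := ∏ r, δ r
  have hσ (q : Q) : δ q ^ Nat.card Q * q • σ = σ := by
    calc δ q ^ Nat.card Q * q • σ = ∏ r, δ (q * r) := by
          simp [σ, hδ, Finset.prod_mul_distrib, Finset.smul_prod', Nat.card_eq_fintype_card]
      _ = σ := Fintype.prod_equiv (Equiv.mulLeft q) _ _ fun _ => rfl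
  have hroot : (powCoprime hcop).symm σ ^ Nat.card Q = σ := (powCoprime hcop).apply_symm_apply σ
  refine ⟨(powCoprime hcop).symm σ, fun q => (powCoprime hcop).injective ?_⟩
  rw [powCoprime_apply, powCoprime_apply, mul_pow, ← smul_pow', hroot, hσ]

variable {H : Type*} [Group H]

open scoped IsMulCommutative in
theorem exists_commute_mul_of_coprime {Q V : Subgroup H} [Finite Q] [V.Normal]
    [IsMulCommutative V] (hcop : (Nat.card V).Coprime (Nat.card Q)) {b : H}
    (hb : ∀ q ∈ Q, Commute (q : H ⧸ V) b) : ∃ v ∈ V, ∀ q ∈ Q, Commute q (b * v) := by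
  -- `q` centralises `b * v` iff `v` is fixed by `v ↦ δ q * q • v`, with `δ q = b⁻¹ (q b q⁻¹)`.
  let _ : MulDistribMulAction Q V :=
    MulDistribMulAction.compHom V ((MulAut.conjNormal (H := V)).comp Q.subtype)
  have hδ (q : Q) : b⁻¹ * (q * b * q⁻¹) ∈ V := by
    rw [← QuotientGroup.eq]
    simpa using ((hb q q.2).mul_inv_cancel).symm
  obtain ⟨s, hs⟩ := exists_mul_smul_eq_of_coprime hcop (δ := fun q => ⟨_, hδ q⟩)
    fun q r => Subtype.ext <| show b⁻¹ * (q * r * b * (q * r : H)⁻¹) =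
      b⁻¹ * (q * b * (q : H)⁻¹) * (q * (b⁻¹ * (r * b * (r : H)⁻¹)) * (q : H)⁻¹) by group
  refine ⟨s, s.2, fun q hq => ?_⟩
  have hfix : b⁻¹ * (q * b * q⁻¹) * (q * s * q⁻¹) = s := congrArg Subtype.val (hs ⟨q, hq⟩)
  calc q * (b * s) = b * (b⁻¹ * (q * b * q⁻¹) * (q * s * q⁻¹)) * q := by group
    _ = b * s * q := by rw [hfix]

theorem exists_commute_mul_of_isPGroup [Finite H] {p : ℕ} [Fact p.Prime] {P V : Subgroup H}
    [V.Normal] (hP : IsPGroup p P) (hpV : ¬ p ∣ Nat.card V) {b : H}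
    (hb : ∀ q ∈ P, Commute (q : H ⧸ V) b) : ∃ v ∈ V, ∀ q ∈ P, Commute q (b * v) := by
  -- `P` acts by conjugation on the coset `b V`, which has `|V|` elements.
  let _ : MulAction P H := MulAction.compHom H (ConjAct.toConjAct.toMonoidHom.comp P.subtype)
  let X : SubMulAction P H :=
    { carrier := {x | (x : H ⧸ V) = b}
      smul_mem' := fun q x (hx : (x : H ⧸ V) = b) => show ((q * x * q⁻¹ : H) : H ⧸ V) = b by
        simpa [hx] using (hb q q.2).mul_inv_cancel }
  have hX : Nat.card X = Nat.card V := Nat.card_congr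
    { toFun := fun x => ⟨b⁻¹ * x, QuotientGroup.eq.1 x.2.symm⟩
      invFun := fun v => ⟨b * v, show ((b * v : H) : H ⧸ V) = b by simp⟩
      left_inv := fun x => by simp
      right_inv := fun v => by simp }
  obtain ⟨⟨x, hx⟩, hfix⟩ := hP.nonempty_fixed_point_of_prime_not_dvd_card X (hX ▸ hpV)
  refine ⟨b⁻¹ * x, QuotientGroup.eq.1 hx.symm, fun q hq => ?_⟩
  have hqx : q * x * q⁻¹ = x := congrArg Subtype.val (hfix ⟨q, hq⟩)
  rw [mul_inv_cancel_left]
  exact mul_inv_eq_iff_eq_mul.1 hqx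

end FiniteGroup

section Profinite

variable {G : Type*} [Group G] [TopologicalSpace G]

instance : Nonempty (OpenNormalSubgroup G) :=
  ⟨{ toOpenSubgroup := ⊤, isNormal' := inferInstanceAs (⊤ : Subgroup G).Normal }⟩

def IsPElement (p : ℕ) (z : G) : Prop :=
  ∀ N : OpenNormalSubgroup G, ∃ k, z ^ p ^ k ∈ N

theorem mem_primesOf_of_dvd_card_map {K : Subgroup G} (N : OpenNormalSubgroup G) {p : ℕ}
    (hp : p.Prime) (h : p ∣ Nat.card (K.map (QuotientGroup.mk' (N : Subgroup G)))) :
    p ∈ primesOf K := by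
  refine ⟨hp, (N : Subgroup G).subgroupOf K, normal_subgroupOf,
    N.isOpen.preimage continuous_subtype_val, ?_⟩
  rwa [← relIndex, ← QuotientGroup.ker_mk' (N : Subgroup G), relIndex_ker]

variable [CompactSpace G]

theorem exists_forall_mem_of_monotone {F : OpenNormalSubgroup G → Set G} (hF : Monotone F)
    (hclosed : ∀ N, IsClosed (F N)) (hne : ∀ N, (F N).Nonempty) : ∃ x, ∀ N, x ∈ F N := by
  simpa using IsCompact.nonempty_iInter_of_directed_nonempty_isCompact_isClosed F
    (fun N N' => ⟨N ⊓ N', hF inf_le_left, hF inf_le_right⟩) hne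
    (fun N => (hclosed N).isCompact) hclosed

variable [IsTopologicalGroup G]

theorem inf_ne_bot_of_infinite {A : Subgroup G} (hA : IsClosed (A : Set G)) [Infinite A]
    (U : OpenSubgroup G) : A ⊓ U ≠ ⊥ := by
  intro h
  have : CompactSpace A := isCompact_iff_compactSpace.1 hA.isCompact
  have : Finite (A ⧸ (U : Subgroup G).subgroupOf A) :=
    quotient_finite_of_isOpen _ (U.isOpen.preimage continuous_subtype_val)
  rw [subgroupOf_eq_bot.2 (disjoint_iff.2 (inf_comm A (U : Subgroup G) ▸ h))] at this
  have : Finite A := Finite.of_equiv _ QuotientGroup.quotientBot.toEquiv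
  exact not_finite A

variable [T1Space G] [TotallyDisconnectedSpace G]

theorem exists_openNormalSubgroup_not_mem {x : G} (hx : x ≠ 1) :
    ∃ N : OpenNormalSubgroup G, x ∉ N := by
  obtain ⟨N, hN⟩ := ProfiniteGrp.exist_openNormalSubgroup_sub_open_nhds_of_one
    isOpen_compl_singleton (Ne.symm hx)
  exact ⟨N, fun h => hN h rfl⟩

theorem eq_one_of_forall_mem_openNormalSubgroup {x : G} (h : ∀ N : OpenNormalSubgroup G, x ∈ N) :
    x = 1 := by
  by_contra hx
  obtain ⟨N, hN⟩ := exists_openNormalSubgroup_not_mem hx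
  exact hN (h N)

theorem exists_commute_mul_of_forall_openNormalSubgroup {V : Subgroup G}
    (hV : IsClosed (V : Set G)) {S : Set G} {b : G}
    (h : ∀ N : OpenNormalSubgroup G, ∃ v ∈ V.map (QuotientGroup.mk' (N : Subgroup G)),
      ∀ s ∈ S, Commute (s : G ⧸ (N : Subgroup G)) (b * v)) :
    ∃ v ∈ V, ∀ s ∈ S, Commute s (b * v) := by
  let F (N : OpenNormalSubgroup G) : Set G := {v | v ∈ V ∧ ∀ s ∈ S, ⁅s, b * v⁆ ∈ N}
  have hF : Monotone F := fun N N' hNN' v hv => ⟨hv.1, fun s hs => hNN' (hv.2 s hs)⟩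
  have hclosed (N : OpenNormalSubgroup G) : IsClosed (F N) := by
    have : F N = (V : Set G) ∩ ⋂ s ∈ S, (fun v => ⁅s, b * v⁆) ⁻¹' N := by ext; simp [F]
    rw [this]
    refine hV.inter (isClosed_biInter fun s _ => N.isClosed.preimage ?_)
    simp only [commutatorElement_def]
    fun_prop
  have hne (N : OpenNormalSubgroup G) : (F N).Nonempty := by
    obtain ⟨-, ⟨u, hu, rfl⟩, hcomm⟩ := h N
    exact ⟨u, hu, fun s hs => QuotientGroup.commute_mk_iff.1 (by simpa using hcomm s hs)⟩
  obtain ⟨v, hv⟩ := exists_forall_mem_of_monotone hF hclosed hne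
  refine ⟨v, (hv (Classical.arbitrary _)).1, fun s hs => ?_⟩
  exact commutatorElement_eq_one_iff_commute.1
    (eq_one_of_forall_mem_openNormalSubgroup fun N => (hv N).2 s hs)

theorem exists_isPElement_ne_one {K : Subgroup G} (hK : IsClosed (K : Set G)) (hK1 : K ≠ ⊥) :
    ∃ p z, p.Prime ∧ z ∈ K ∧ z ≠ 1 ∧ IsPElement p z := by
  obtain ⟨a, haK, ha1⟩ := (bot_or_exists_ne_one K).resolve_left hK1
  obtain ⟨M, haM⟩ := exists_openNormalSubgroup_not_mem ha1
  have hord : orderOf (a : G ⧸ (M : Subgroup G)) ≠ 1 := by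
    rwa [Ne, orderOf_eq_one_iff, QuotientGroup.eq_one_iff]
  obtain ⟨p, hp, hpa⟩ := Nat.exists_prime_and_dvd hord
  let F (N : OpenNormalSubgroup G) : Set G := {z | z ∈ K ∧ z ∉ M ∧ ∃ k, z ^ p ^ k ∈ N}
  have hF : Monotone F := fun N N' hNN' z ⟨hzK, hzM, k, hk⟩ => ⟨hzK, hzM, k, hNN' hk⟩
  have hclosed (N : OpenNormalSubgroup G) : IsClosed (F N) := by
    have hpow : IsClosed {z : G | ∃ k, z ^ p ^ k ∈ N} := by
      convert (isClosed_discrete {x : G ⧸ (N : Subgroup G) | ∃ k, x ^ p ^ k = 1}).preimage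
        QuotientGroup.continuous_mk using 1
      ext
      simp only [Set.mem_ofPred_eq, Set.mem_preimage, ← QuotientGroup.mk_pow,
        QuotientGroup.eq_one_iff]
      rfl
    exact hK.inter (M.isOpen.isClosed_compl.inter hpow)
  -- The `p`-part of `a` modulo `N` is not in `M`, since `p` divides the order of `a` modulo `M`.
  have hne (N : OpenNormalSubgroup G) : (F N).Nonempty := by
    have hN : (N : Subgroup G).index ≠ 0 := index_ne_zero_of_finite
    refine ⟨a ^ ordCompl[p] (N : Subgroup G).index, pow_mem haK _, fun h => ?_,
      (N : Subgroup G).index.factorization p, ?_⟩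
    · have hpow : (a : G ⧸ (M : Subgroup G)) ^ ordCompl[p] (N : Subgroup G).index = 1 := by
        rwa [← QuotientGroup.mk_pow, QuotientGroup.eq_one_iff]
      exact Nat.not_dvd_ordCompl hp hN (hpa.trans (orderOf_dvd_of_pow_eq_one hpow))
    · rw [← pow_mul, mul_comm, Nat.ordProj_mul_ordCompl_eq_self]
      exact pow_index_mem _ a
  obtain ⟨z, hz⟩ := exists_forall_mem_of_monotone hF hclosed hne
  exact ⟨p, z, hp, (hz M).1, fun h => (hz M).2.1 (h ▸ one_mem _), fun N => (hz N).2.2⟩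

theorem mem_primesOf_of_isPElement {K : Subgroup G} {p : ℕ} (hp : p.Prime) {z : G}
    (hzK : z ∈ K) (hz1 : z ≠ 1) (hz : IsPElement p z) : p ∈ primesOf K := by
  obtain ⟨M, hzM⟩ := exists_openNormalSubgroup_not_mem hz1
  obtain ⟨k, hk⟩ := hz M
  let x : K.map (QuotientGroup.mk' (M : Subgroup G)) := ⟨z, mem_map_of_mem _ hzK⟩
  have hxk : x ^ p ^ k = 1 := Subtype.ext ((QuotientGroup.eq_one_iff _).2 hk)
  obtain ⟨j, -, hj⟩ := (Nat.dvd_prime_pow hp).1 (orderOf_dvd_of_pow_eq_one hxk)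
  have hj0 : j ≠ 0 := by
    rintro rfl
    exact hzM ((QuotientGroup.eq_one_iff z).1 (congrArg Subtype.val (orderOf_eq_one_iff.1 hj)))
  exact mem_primesOf_of_dvd_card_map M hp
    ((dvd_pow_self p hj0).trans (hj ▸ orderOf_dvd_natCard x))

end Profinite

section CoprimeAction

variable {G : Type*} [Group G] [TopologicalSpace G] [IsTopologicalGroup G] [CompactSpace G]
  [T1Space G] [TotallyDisconnectedSpace G]

theorem exists_commute_mul_of_isPElement {B : Subgroup G} [B.Normal] (hB : IsClosed (B : Set G))
    (M : OpenNormalSubgroup G) {p : ℕ} [Fact p.Prime] (hpB : p ∉ primesOf B) {z : G}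
    (hzM : z ∈ M) (hz : IsPElement p z) {b : G} (hb : b ∈ B) :
    ∃ v ∈ B ⊓ (M : Subgroup G), Commute z (b * v) := by
  suffices h : ∃ v ∈ B ⊓ (M : Subgroup G), ∀ s ∈ ({z} : Set G), Commute s (b * v) from
    h.imp fun v ⟨hv, hcomm⟩ => ⟨hv, hcomm z rfl⟩
  refine exists_commute_mul_of_forall_openNormalSubgroup (hB.inter M.isClosed) fun N => ?_
  set π := QuotientGroup.mk' (N : Subgroup G)
  set V := (B ⊓ (M : Subgroup G)).map π
  have : V.Normal := (inferInstance : (B ⊓ (M : Subgroup G)).Normal).map π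
    (QuotientGroup.mk'_surjective _)
  have hP : IsPGroup p (zpowers (π z)) := by
    obtain ⟨k, hk⟩ := hz N
    have hk' : π z ^ p ^ k = 1 := by
      rwa [← map_pow, QuotientGroup.mk'_apply, QuotientGroup.eq_one_iff]
    obtain ⟨j, -, hj⟩ := (Nat.dvd_prime_pow Fact.out).1 (orderOf_dvd_of_pow_eq_one hk')
    exact IsPGroup.of_card ((Nat.card_zpowers (π z)).trans hj)
  have hpV : ¬ p ∣ Nat.card V := fun h => hpB <|
    mem_primesOf_of_dvd_card_map N Fact.out (h.trans (card_dvd_of_le (map_mono inf_le_left)))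
  have hzb : Commute (π z : (G ⧸ (N : Subgroup G)) ⧸ V) (π b) := by
    rw [QuotientGroup.commute_mk_iff, ← map_commutatorElement]
    exact mem_map_of_mem _ (inf_comm (M : Subgroup G) B ▸
      commutator_le_inf _ _ (commutator_mem_commutator hzM hb))
  obtain ⟨v, hv, hcomm⟩ := exists_commute_mul_of_isPGroup hP hpV (b := π b) <| by
    rintro - ⟨n, rfl⟩
    simpa using hzb.zpow_left n
  exact ⟨v, hv, fun s hs => hs ▸ hcomm _ (mem_zpowers _)⟩

theorem exists_commute_mul_of_isMulCommutative {A B W : Subgroup G} [W.Normal]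
    [IsMulCommutative W] (hW : IsClosed (W : Set G)) (hWB : W ≤ B)
    (hAB : Disjoint (primesOf A) (primesOf B)) (M : OpenNormalSubgroup G) {w : G} (hw : w ∈ W) :
    ∃ v ∈ W ⊓ (M : Subgroup G), ∀ a ∈ A ⊓ (M : Subgroup G), Commute a (w * v) :=
  exists_commute_mul_of_forall_openNormalSubgroup (hW.inter M.isClosed) fun N => by
    set π := QuotientGroup.mk' (N : Subgroup G)
    have : ((W ⊓ M).map π).Normal := (inferInstance : (W ⊓ (M : Subgroup G)).Normal).map π
      (QuotientGroup.mk'_surjective _)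
    have : IsMulCommutative ((W ⊓ M).map π) := .of_setLike_mul_comm fun _ ha _ hb =>
      setLike_mul_comm (map_mono inf_le_left ha : _ ∈ W.map π) (map_mono inf_le_left hb)
    have hcop : (Nat.card ((W ⊓ M).map π)).Coprime (Nat.card ((A ⊓ M).map π)) :=
      Nat.coprime_of_dvd fun q hq hqW hqA => Set.disjoint_left.1 hAB
        (mem_primesOf_of_dvd_card_map N hq (hqA.trans (card_dvd_of_le (map_mono inf_le_left))))
        (mem_primesOf_of_dvd_card_map N hq
          (hqW.trans (card_dvd_of_le (map_mono (inf_le_left.trans hWB)))))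
    obtain ⟨v, hv, hcomm⟩ := exists_commute_mul_of_coprime hcop (b := π w) <| by
      rintro - ⟨a, ha, rfl⟩
      rw [QuotientGroup.commute_mk_iff, ← map_commutatorElement]
      exact mem_map_of_mem _ (inf_comm (M : Subgroup G) W ▸
        commutator_le_inf _ _ (commutator_mem_commutator ha.2 hw))
    exact ⟨v, hv, fun a ha => hcomm _ (mem_map_of_mem _ ha)⟩

end CoprimeAction

section CAGroup

variable {G : Type*} [Group G] [TopologicalSpace G] [IsTopologicalGroup G] [CompactSpace G]
  [TotallyDisconnectedSpace G]

theorem derivedSeries_eq_bot_of_isCA [T1Space G] {A B : Subgroup G} [B.Normal]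
    (hA : IsClosed (A : Set G)) (hB : IsClosed (B : Set G))
    (hAB : Disjoint (primesOf A) (primesOf B)) [Infinite A] {d : ℕ} (hCA : IsCA G d) :
    derivedSeries B d = ⊥ := by
  refine (eq_bot_iff_forall _).2 fun x hx =>
    Subtype.ext (eq_one_of_forall_mem_openNormalSubgroup fun M => ?_)
  obtain ⟨p, z, hp, hz, hz1, hzp⟩ :=
    exists_isPElement_ne_one (hA.inter M.isClosed) (inf_ne_bot_of_infinite hA M.toOpenSubgroup)
  have : Fact p.Prime := ⟨hp⟩
  have hpB : p ∉ primesOf B := Set.disjoint_left.1 hAB (mem_primesOf_of_isPElement hp hz.1 hz1 hzp)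
  set π := QuotientGroup.mk' (M : Subgroup G)
  have hrange : (π.comp B.subtype).range ≤ (π.comp (centralizer {z}).subtype).range := by
    rintro - ⟨b, rfl⟩
    obtain ⟨v, hv, hcomm⟩ := exists_commute_mul_of_isPElement hB M hpB hz.2 hzp b.2
    refine ⟨⟨b * v, mem_centralizer_singleton_iff.2 hcomm.symm.eq⟩, ?_⟩
    simpa [π] using (QuotientGroup.eq_one_iff v).2 hv.2
  have hx' := map_derivedSeries_le_of_range_le hrange d (mem_map_of_mem (π.comp B.subtype) hx)
  rw [(hCA z hz1).derivedSeries_eq_bot, Subgroup.map_bot, mem_bot] at hx'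
  exact (QuotientGroup.eq_one_iff _).1 hx'

theorem exists_open_solubleOfLength_of_isCA [T2Space G] {A B : Subgroup G} [B.Normal]
    (hB : IsClosed (B : Set G)) (hB1 : B ≠ ⊥) {n : ℕ} (hn : derivedSeries B n = ⊥)
    (hAB : Disjoint (primesOf A) (primesOf B)) {d : ℕ} (hCA : IsCA G d) :
    ∃ A₀ : Subgroup A, IsOpen (A₀ : Set A) ∧ SolubleOfLength A₀ d := by
  obtain ⟨W, _, _, hW, hW1, hWB⟩ := exists_isMulCommutative_normal_le hB hB1 hn
  obtain ⟨w₀, hw₀, hw₀1⟩ := (bot_or_exists_ne_one W).resolve_left hW1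
  obtain ⟨M, hw₀M⟩ := exists_openNormalSubgroup_not_mem hw₀1
  obtain ⟨v, hv, hcomm⟩ := exists_commute_mul_of_isMulCommutative hW hWB hAB M hw₀
  have hw1 : w₀ * v ≠ 1 := fun h => hw₀M (by rw [mul_eq_one_iff_eq_inv.1 h]; exact inv_mem hv.2)
  let f : (M : Subgroup G).subgroupOf A →* centralizer {w₀ * v} :=
    (A.subtype.comp ((M : Subgroup G).subgroupOf A).subtype).codRestrict _ fun a =>
      mem_centralizer_singleton_iff.2 (hcomm _ ⟨a.1.2, a.2⟩).eq
  refine ⟨(M : Subgroup G).subgroupOf A, M.isOpen.preimage continuous_subtype_val,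
    (hCA _ hw1).of_injective (f := f) ?_ fun a b h => Subtype.ext (Subtype.ext congr($h.1))⟩
  exact (continuous_subtype_val.comp continuous_subtype_val).subtype_mk _

end CAGroup

theorem product_coprime_CAd_virtually_soluble_general
    (G : Type*) [Group G] [TopologicalSpace G] [IsTopologicalGroup G]
    [CompactSpace G] [T2Space G] [TotallyDisconnectedSpace G]
    (B A : Subgroup G) (hBc : IsClosed (B : Set G)) (hBn : B.Normal) (hBnt : B ≠ ⊥)
    (hAc : IsClosed (A : Set G))
    (hcop : primesOf ↥A ∩ primesOf ↥B = ∅)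
    (d : ℕ) (hCA : IsCA G d) :
    (∃ A₀ : Subgroup ↥A, IsOpen (A₀ : Set ↥A) ∧ SolubleOfLength ↥A₀ d) ∧
      (Infinite ↥A → SolubleOfLength ↥B d) := by
  have hAB : Disjoint (primesOf A) (primesOf B) := Set.disjoint_iff_inter_eq_empty.2 hcop
  rcases finite_or_infinite A with hA | hA
  · exact ⟨⟨⊥, isOpen_discrete _, solubleOfLength_of_subsingleton d⟩,
      fun _ => (not_finite A).elim⟩
  · have hBd := derivedSeries_eq_bot_of_isCA hAc hBc hAB hCA
    exact ⟨exists_open_solubleOfLength_of_isCA hBc hBnt hBd hAB hCA,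
      fun _ => solubleOfLength_of_derivedSeries_eq_bot hBd⟩

/-- Lemma 2.4, second part: if moreover `G` is a `CA_d`-group, then `A` has an open subgroup
soluble of derived length at most `d`, and if `A` is infinite then `B` is soluble of derived
length at most `d`. -/
theorem product_coprime_CAd_virtually_soluble
    (G : Type*) [Group G] [TopologicalSpace G] [IsTopologicalGroup G]
    [CompactSpace G] [T2Space G] [TotallyDisconnectedSpace G]
    (B A : Subgroup G) (hBc : IsClosed (B : Set G)) (hBn : B.Normal) (hBnt : B ≠ ⊥)
    (hAc : IsClosed (A : Set G))
    (hprod : (B : Set G) * (A : Set G) = Set.univ)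
    (hcop : primesOf ↥A ∩ primesOf ↥B = ∅)
    (d : ℕ) (hd : 1 ≤ d) (hCA : IsCA G d) :
    (∃ A₀ : Subgroup ↥A, IsOpen (A₀ : Set ↥A) ∧ SolubleOfLength ↥A₀ d) ∧
      (Infinite ↥A → SolubleOfLength ↥B d) :=
  product_coprime_CAd_virtually_soluble_general G B A hBc hBn hBnt hAc hcop d hCA
end
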